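/- Diagonal mixing preserves two-sided contiguity: suppose for each j ∈ ℕ there are probability measures Q^{n,j} ≪ P^n (n ∈ ℕ) such that (i) there exists δ_j > 0 with Q^{n,j}(A) ≥ δ_j for all n and all A ∈ 𝓕^n with P^n(A) ≥ 2^{-j}, and (ii) (Q^{n,j})_n is contiguous with respect to (P^n)_n for each j. Define Q^n = Σ_{j=1}^∞ 2^{-j} Q^{n,j}. Then each Q^n is a probability measure equivalent to P^n, (Q^n) is contiguous with respect to (P^n), and (P^n) is contiguous with respect to (Q^n). -/

import Mathlib

/-!
Write `Q n = ∑ⱼ wⱼ Q^{n,j}` with `wⱼ = 2^{-(j+1)}`. If `P^n(Aₙ) → 0`, each term `wⱼ Q^{n,j}(Aₙ)`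
tends to zero by contiguity and is bounded by `wⱼ`, so `Q^n(Aₙ) → 0` by dominated convergence for
series. Conversely, a set with `P^n(A) ≥ ε ≥ 2^{-(j+1)}` has `Q^n(A) ≥ wⱼ δⱼ`: the mixture charges
`P`-large sets uniformly in `n`, which gives both `P^n ≪ Q^n` and contiguity of `(P^n)` w.r.t. `(Q^n)`.
-/

open MeasureTheory Filter Set Topology
open scoped ENNReal

theorem ENNReal.tendsto_tsum_of_dominated_convergence {ι : Type*} [Countable ι]
    {f : ℕ → ι → ℝ≥0∞} {g bound : ι → ℝ≥0∞} (h_fin : ∑' i, bound i ≠ ∞)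
    (h_bound : ∀ n i, f n i ≤ bound i) (h_lim : ∀ i, Tendsto (f · i) atTop (𝓝 (g i))) :
    Tendsto (fun n => ∑' i, f n i) atTop (𝓝 (∑' i, g i)) := by
  let : MeasurableSpace ι := ⊤
  simp only [← lintegral_count]
  exact tendsto_lintegral_of_dominated_convergence bound (fun _ => measurable_of_countable _)
    (fun n => ae_of_all _ (h_bound n)) (by rwa [lintegral_count]) (ae_of_all _ h_lim)

theorem ENNReal.tsum_inv_two_pow_succ : ∑' j : ℕ, (2 : ℝ≥0∞)⁻¹ ^ (j + 1) = 1 := by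
  rw [ENNReal.tsum_geometric_add_one, ENNReal.one_sub_inv_two, inv_inv,
    ENNReal.inv_mul_cancel] <;> norm_num

namespace MeasureTheory

section Mixture

variable {α ι : Type*} [MeasurableSpace α] {w : ι → ℝ≥0∞} {μ : ι → Measure α}

theorem Measure.sum_smul_apply [Countable ι] (w : ι → ℝ≥0∞) (μ : ι → Measure α) (s : Set α) :
    Measure.sum (fun i => w i • μ i) s = ∑' i, w i * μ i s := by
  simp [Measure.sum_apply_of_countable]

theorem isProbabilityMeasure_sum_smul [∀ i, IsProbabilityMeasure (μ i)] (hw : ∑' i, w i = 1) :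
    IsProbabilityMeasure (Measure.sum fun i => w i • μ i) :=
  ⟨by simp [hw]⟩

theorem le_sum_smul_apply [Countable ι] (i : ι) (s : Set α) :
    w i * μ i s ≤ Measure.sum (fun i => w i • μ i) s := by
  rw [Measure.sum_smul_apply]
  exact ENNReal.le_tsum i

end Mixture

section Contiguity

variable {Ω : ℕ → Type*} [∀ n, MeasurableSpace (Ω n)]

def Contiguous (μ ν : ∀ n, Measure (Ω n)) : Prop :=
  ∀ A : ∀ n, Set (Ω n), (∀ n, MeasurableSet (A n)) →
    Tendsto (fun n => ν n (A n)) atTop (𝓝 0) → Tendsto (fun n => μ n (A n)) atTop (𝓝 0)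

def UniformlyCharges (μ ν : ∀ n, Measure (Ω n)) : Prop :=
  ∀ ε > 0, ∃ δ > 0, ∀ n (s : Set (Ω n)), MeasurableSet s → ε ≤ ν n s → δ ≤ μ n s

theorem UniformlyCharges.absolutelyContinuous {μ ν : ∀ n, Measure (Ω n)}
    (h : UniformlyCharges μ ν) (n : ℕ) : ν n ≪ μ n := by
  refine Measure.AbsolutelyContinuous.mk fun s hs hμs => ?_
  by_contra hνs
  obtain ⟨δ, hδ, hδle⟩ := h (ν n s) (pos_iff_ne_zero.2 hνs)
  exact (hδ.trans_le (hμs ▸ hδle n s hs le_rfl)).false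

theorem UniformlyCharges.contiguous {μ ν : ∀ n, Measure (Ω n)} (h : UniformlyCharges μ ν) :
    Contiguous ν μ := by
  intro A hA hμA
  refine ENNReal.tendsto_nhds_zero.2 fun ε hε => ?_
  obtain ⟨δ, hδ, hδle⟩ := h ε hε
  filter_upwards [hμA.eventually_lt_const hδ] with n hn
  by_contra! hεν
  exact (hδle n (A n) (hA n) hεν.le).not_gt hn

theorem Contiguous.sum_smul {ι : Type*} [Countable ι] {w : ι → ℝ≥0∞}
    {Q : ι → ∀ n, Measure (Ω n)} [∀ i n, IsProbabilityMeasure (Q i n)] {P : ∀ n, Measure (Ω n)}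
    (hw : ∑' i, w i ≠ ∞) (hQ : ∀ i, Contiguous (Q i) P) :
    Contiguous (fun n => Measure.sum fun i => w i • Q i n) P := by
  intro A hA hPA
  simp only [Measure.sum_smul_apply]
  have hterm (i : ι) : Tendsto (fun n => w i * Q i n (A n)) atTop (𝓝 0) := by
    simpa using ENNReal.Tendsto.const_mul (hQ i A hA hPA)
      (Or.inr (ENNReal.ne_top_of_tsum_ne_top hw i))
  simpa using ENNReal.tendsto_tsum_of_dominated_convergence hw
    (fun n i => mul_le_of_le_one_right' prob_le_one) hterm

theorem uniformlyCharges_sum_smul {ι : Type*} [Countable ι] {w t : ι → ℝ≥0∞}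
    {Q : ι → ∀ n, Measure (Ω n)} {P : ∀ n, Measure (Ω n)} (hw : ∀ i, w i ≠ 0)
    (ht : ∀ ε > 0, ∃ i, t i ≤ ε)
    (hQ : ∀ i, ∃ δ > 0, ∀ n (s : Set (Ω n)), MeasurableSet s → t i ≤ P n s → δ ≤ Q i n s) :
    UniformlyCharges (fun n => Measure.sum fun i => w i • Q i n) P := by
  intro ε hε
  obtain ⟨i, hti⟩ := ht ε hε
  obtain ⟨δ, hδ, hδle⟩ := hQ i
  refine ⟨w i * δ, ENNReal.mul_pos (hw i) hδ.ne', fun n s hs hεs => ?_⟩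
  calc w i * δ ≤ w i * Q i n s := by gcongr; exact hδle n s hs (hti.trans hεs)
    _ ≤ _ := le_sum_smul_apply i s

end Contiguity

end MeasureTheory

theorem diagonal_mixing_bicontiguity_general
    {Ω : ℕ → Type*} [∀ n, MeasurableSpace (Ω n)]
    (P : ∀ n, Measure (Ω n))
    (Q : ℕ → ∀ n, Measure (Ω n))
    [∀ j n, IsProbabilityMeasure (Q j n)]
    (hac : ∀ j n, Q j n ≪ P n)
    (hlower : ∀ j : ℕ, ∃ δ : ℝ≥0∞, 0 < δ ∧ ∀ n, ∀ A : Set (Ω n), MeasurableSet A →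
      (2 : ℝ≥0∞)⁻¹ ^ (j + 1) ≤ P n A → δ ≤ Q j n A)
    (hcontig : ∀ j : ℕ, ∀ A : ∀ n, Set (Ω n), (∀ n, MeasurableSet (A n)) →
      Tendsto (fun n => P n (A n)) atTop (nhds 0) →
      Tendsto (fun n => Q j n (A n)) atTop (nhds 0)) :
    (∀ n, IsProbabilityMeasure (Measure.sum (fun j => (2 : ℝ≥0∞)⁻¹ ^ (j + 1) • Q j n))) ∧
    (∀ n, Measure.sum (fun j => (2 : ℝ≥0∞)⁻¹ ^ (j + 1) • Q j n) ≪ P n) ∧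
    (∀ n, P n ≪ Measure.sum (fun j => (2 : ℝ≥0∞)⁻¹ ^ (j + 1) • Q j n)) ∧
    (∀ A : ∀ n, Set (Ω n), (∀ n, MeasurableSet (A n)) →
      Tendsto (fun n => P n (A n)) atTop (nhds 0) →
      Tendsto (fun n => Measure.sum (fun j => (2 : ℝ≥0∞)⁻¹ ^ (j + 1) • Q j n) (A n)) atTop (nhds 0)) ∧
    (∀ A : ∀ n, Set (Ω n), (∀ n, MeasurableSet (A n)) →
      Tendsto (fun n => Measure.sum (fun j => (2 : ℝ≥0∞)⁻¹ ^ (j + 1) • Q j n) (A n)) atTop (nhds 0) →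
      Tendsto (fun n => P n (A n)) atTop (nhds 0)) := by
  have hw : ∑' j : ℕ, (2 : ℝ≥0∞)⁻¹ ^ (j + 1) = 1 := ENNReal.tsum_inv_two_pow_succ
  have hcharges := uniformlyCharges_sum_smul (w := fun j => (2 : ℝ≥0∞)⁻¹ ^ (j + 1))
    (t := fun j => (2 : ℝ≥0∞)⁻¹ ^ (j + 1)) (fun j => by simp)
    (fun ε hε => ENNReal.exists_inv_two_pow_lt hε.ne' |>.imp fun j hj =>
      (pow_le_pow_right_of_le_one' (by norm_num) j.le_succ).trans hj.le) hlower
  exact ⟨fun n => isProbabilityMeasure_sum_smul hw,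
    fun n => Measure.absolutelyContinuous_sum_left fun j => (hac j n).smul_left _,
    hcharges.absolutelyContinuous,
    Contiguous.sum_smul (hw ▸ ENNReal.one_ne_top) hcontig,
    hcharges.contiguous⟩

theorem diagonal_mixing_bicontiguity
    {Ω : ℕ → Type*} [∀ n, MeasurableSpace (Ω n)]
    (P : ∀ n, Measure (Ω n)) [∀ n, IsProbabilityMeasure (P n)]
    (Q : ℕ → ∀ n, Measure (Ω n))
    [∀ j n, IsProbabilityMeasure (Q j n)]
    (hac : ∀ j n, Q j n ≪ P n)
    (hlower : ∀ j : ℕ, ∃ δ : ℝ≥0∞, 0 < δ ∧ ∀ n, ∀ A : Set (Ω n), MeasurableSet A →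
      (2 : ℝ≥0∞)⁻¹ ^ (j + 1) ≤ P n A → δ ≤ Q j n A)
    (hcontig : ∀ j : ℕ, ∀ A : ∀ n, Set (Ω n), (∀ n, MeasurableSet (A n)) →
      Tendsto (fun n => P n (A n)) atTop (nhds 0) →
      Tendsto (fun n => Q j n (A n)) atTop (nhds 0)) :
    (∀ n, IsProbabilityMeasure (Measure.sum (fun j => (2 : ℝ≥0∞)⁻¹ ^ (j + 1) • Q j n))) ∧
    (∀ n, Measure.sum (fun j => (2 : ℝ≥0∞)⁻¹ ^ (j + 1) • Q j n) ≪ P n) ∧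
    (∀ n, P n ≪ Measure.sum (fun j => (2 : ℝ≥0∞)⁻¹ ^ (j + 1) • Q j n)) ∧
    (∀ A : ∀ n, Set (Ω n), (∀ n, MeasurableSet (A n)) →
      Tendsto (fun n => P n (A n)) atTop (nhds 0) →
      Tendsto (fun n => Measure.sum (fun j => (2 : ℝ≥0∞)⁻¹ ^ (j + 1) • Q j n) (A n)) atTop (nhds 0)) ∧
    (∀ A : ∀ n, Set (Ω n), (∀ n, MeasurableSet (A n)) →
      Tendsto (fun n => Measure.sum (fun j => (2 : ℝ≥0∞)⁻¹ ^ (j + 1) • Q j n) (A n)) atTop (nhds 0) →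
      Tendsto (fun n => P n (A n)) atTop (nhds 0)) :=
  diagonal_mixing_bicontiguity_general P Q hac hlower hcontig
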